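/- arXiv:1704.08162 — 3 statements merged into one kernel-verified Lean document; each statement's English description precedes it below -/
import Mathlib

section
/- For 0 ≤ V ≤ 1/√2, the Svetlichny family admits the decomposition P(abc|xyz) = (1/4) Σ_{λ=0}^{3} P_λ(ab|xy) · D_λ(c|z), where D_λ(c|z) is the deterministic distribution with c = αz ⊕ β for λ = 2α+β, and each P_λ(ab|xy) is a valid bipartite probability distribution (nonnegative, normalized for each (x,y)) given explicitly by: P₀(ab|xy) equals (1+(-1)^{a⊕b}√2V)/4 for xy=00, 1/4 for xy ∈ {01,10}, and (1−(-1)^{a⊕b}√2V)/4 for xy=11; and the other P_λ are obtained by appropriate sign flips so that the convex combination reproduces P. -/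
set_option maxHeartbeats 2000000


/-- The Svetlichny family of tripartite correlations. -/
noncomputable def svP (V : ℝ) (a b c x y z : Fin 2) : ℝ :=
  (2 + (-1 : ℝ) ^ ((a + b + c + x * y + y * z + x * z : Fin 2) : ℕ) * Real.sqrt 2 * V) / 16

/-- The deterministic distribution `D_{(α,β)}(c|z)`, equal to 1 iff `c = α·z ⊕ β`. -/
def Ddet (l : Fin 2 × Fin 2) (c z : Fin 2) : ℝ := if c = l.1 * z + l.2 then 1 else 0

/-- Sign pattern of the bipartite pieces. -/
def sgnP (l : Fin 2 × Fin 2) (x y : Fin 2) : ℝ :=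
  (if l.1 = 0 then (if x = 0 ∧ y = 0 then 1 else if x = 1 ∧ y = 1 then -1 else 0)
   else (if x = y then 0 else 1)) * (if l.2 = 0 then 1 else -1)

theorem stmt2 (V : ℝ) (h0 : 0 ≤ V) (h1 : V ≤ 1 / Real.sqrt 2) :
    ∃ P : Fin 2 × Fin 2 → Fin 2 → Fin 2 → Fin 2 → Fin 2 → ℝ,
      (∀ l a b x y, 0 ≤ P l a b x y) ∧
      (∀ l x y, ∑ a : Fin 2, ∑ b : Fin 2, P l a b x y = 1) ∧
      (∀ a b x y : Fin 2, P (0, 0) a b x y =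
        if x = 0 ∧ y = 0 then (1 + (-1 : ℝ) ^ ((a + b : Fin 2) : ℕ) * Real.sqrt 2 * V) / 4
        else if x = 1 ∧ y = 1 then (1 - (-1 : ℝ) ^ ((a + b : Fin 2) : ℕ) * Real.sqrt 2 * V) / 4
        else 1 / 4) ∧
      (∀ a b c x y z : Fin 2,
        svP V a b c x y z = (1 / 4) * ∑ l : Fin 2 × Fin 2, P l a b x y * Ddet l c z) := by
  have hpos : (0:ℝ) < Real.sqrt 2 := Real.sqrt_pos.mpr (by norm_num)
  have h2 : 0 ≤ Real.sqrt 2 * V := mul_nonneg hpos.le h0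
  have hs : Real.sqrt 2 * V ≤ 1 := by
    have := mul_le_mul_of_nonneg_left h1 hpos.le
    rwa [mul_one_div, div_self hpos.ne'] at this
  refine ⟨fun l a b x y =>
      (1 + sgnP l x y * ((-1 : ℝ) ^ ((a + b : Fin 2) : ℕ) * (Real.sqrt 2 * V))) / 4,
    ?_, ?_, ?_, ?_⟩
  · rintro ⟨l1, l2⟩ a b x y
    fin_cases l1 <;> fin_cases l2 <;> fin_cases a <;> fin_cases b <;> fin_cases x <;>
      fin_cases y <;> simp [sgnP] <;> nlinarith
  · rintro ⟨l1, l2⟩ x y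
    simp [Fin.sum_univ_two]
    ring
  · intro a b x y
    fin_cases a <;> fin_cases b <;> fin_cases x <;> fin_cases y <;>
      simp [sgnP] <;> ring
  · intro a b c x y z
    fin_cases a <;> fin_cases b <;> fin_cases c <;> fin_cases x <;> fin_cases y <;>
      fin_cases z <;>
      simp [svP, Ddet, sgnP, Fintype.sum_prod_type, Fin.sum_univ_two] <;> ring
end

section
/- Let A₀, A₁, B₀, B₁, C₀, C₁ be Hermitian operators with eigenvalues ±1 on qubit Hilbert spaces, with A₀, A₁ (resp. B₀,B₁ and C₀,C₁) anticommuting. Then for any biseparable three-qubit state ρ = Σ p_λ ρ_A^λ⊗ρ_{BC}^λ + Σ q_λ ρ_{AC}^λ⊗ρ_B^λ + Σ r_λ ρ_{AB}^λ⊗ρ_C^λ, the expectation of the Svetlichny operator S = A₀B₀C₁+A₀B₁C₀+A₁B₀C₀−A₁B₁C₁+A₀B₁C₁+A₁B₀C₁+A₁B₁C₀−A₀B₀C₀ satisfies Tr(Sρ) ≤ 2√2. -/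
open Matrix Kronecker ComplexOrder

/-- A density matrix: positive semidefinite with unit trace. -/
def IsDensity {ι : Type*} [Fintype ι] [DecidableEq ι] (ρ : Matrix ι ι ℂ) : Prop :=
  ρ.PosSemidef ∧ ρ.trace = 1

/-- Reindexing ((a,c),b) ↦ (a,(b,c)) for the AC|B biseparable terms. -/
def eACB : (Fin 2 × Fin 2) × Fin 2 ≃ Fin 2 × (Fin 2 × Fin 2) where
  toFun := fun p => (p.1.1, (p.2, p.1.2))
  invFun := fun p => ((p.1, p.2.2), p.2.1)
  left_inv := fun _ => rfl
  right_inv := fun _ => rfl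

/-- Reindexing ((a,b),c) ↦ (a,(b,c)) for the AB|C biseparable terms. -/
def eABC : (Fin 2 × Fin 2) × Fin 2 ≃ Fin 2 × (Fin 2 × Fin 2) :=
  Equiv.prodAssoc (Fin 2) (Fin 2) (Fin 2)

/-!
Each biseparable term is a product state `τ ⊗ σ` across one of the cuts, say `A|BC`, and across
it the Svetlichny operator splits as `A₀ ⊗ CHSH' + A₁ ⊗ CHSH`. For the anticommuting pair
`(A₀, A₁)` the expectations `(a, b)` in `τ` lie in the unit disk, so the term contributes
`⟨N⟩_σ` with `N = a CHSH' + b CHSH`. As `CHSH` and `CHSH'` anticommute and both square to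
`4 (1 - T)` with `T = B₀B₁ ⊗ C₀C₁` a Hermitian involution, `N² = 4 (a² + b²) (1 - T) ≤ 8`, and
`⟨N⟩² ≤ ⟨N²⟩` bounds the term by `2√2`. The bound passes to the mixture `ρ` by
linearity.
-/

section Expectation

variable {ι : Type*} [Fintype ι]

def expectation (M ρ : Matrix ι ι ℂ) : ℝ :=
  (M * ρ).trace.re

lemma expectation_add (M N ρ : Matrix ι ι ℂ) :
    expectation (M + N) ρ = expectation M ρ + expectation N ρ := by
  simp [expectation, add_mul]

lemma expectation_sub (M N ρ : Matrix ι ι ℂ) :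
    expectation (M - N) ρ = expectation M ρ - expectation N ρ := by
  simp [expectation, sub_mul]

lemma expectation_real_smul (c : ℝ) (M ρ : Matrix ι ι ℂ) :
    expectation ((c : ℂ) • M) ρ = c * expectation M ρ := by
  simp [expectation]

lemma expectation_one [DecidableEq ι] {ρ : Matrix ι ι ℂ} (hρ : IsDensity ρ) :
    expectation 1 ρ = 1 := by
  simp [expectation, hρ.2]

lemma expectation_add_right (M ρ σ : Matrix ι ι ℂ) :
    expectation M (ρ + σ) = expectation M ρ + expectation M σ := by
  simp [expectation, mul_add]

lemma expectation_sum_smul_le {n : ℕ} (M : Matrix ι ι ℂ) (w : Fin n → ℝ) (hw : ∀ l, 0 ≤ w l)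
    (σ : Fin n → Matrix ι ι ℂ) {c : ℝ} (hσ : ∀ l, expectation M (σ l) ≤ c) :
    expectation M (∑ l, (w l : ℂ) • σ l) ≤ (∑ l, w l) * c := by
  simp only [expectation, Finset.mul_sum, Matrix.mul_smul, Matrix.trace_sum, Matrix.trace_smul,
    smul_eq_mul, Complex.re_sum, Complex.re_ofReal_mul, Finset.sum_mul]
  exact Finset.sum_le_sum fun l _ => mul_le_mul_of_nonneg_left (hσ l) (hw l)

lemma expectation_conjTranspose_mul_self_nonneg (X : Matrix ι ι ℂ) {ρ : Matrix ι ι ℂ}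
    (hρ : ρ.PosSemidef) : 0 ≤ expectation (Xᴴ * X) ρ := by
  rw [expectation, Matrix.mul_assoc, Matrix.trace_mul_comm]
  exact (Complex.nonneg_iff.mp (hρ.mul_mul_conjTranspose_same X).trace_nonneg).1

lemma im_trace_mul_eq_zero {M ρ : Matrix ι ι ℂ} (hM : M.IsHermitian) (hρ : ρ.IsHermitian) :
    (M * ρ).trace.im = 0 := by
  refine Complex.conj_eq_iff_im.mp ?_
  rw [starRingEnd_apply, ← trace_conjTranspose, conjTranspose_mul, hM.eq, hρ.eq, trace_mul_comm]

/-- Nonnegativity of the variance `⟨(M - ⟨M⟩)²⟩`. -/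
lemma sq_expectation_le [DecidableEq ι] {M ρ : Matrix ι ι ℂ} (hM : M.IsHermitian)
    (hρ : IsDensity ρ) :
    expectation M ρ ^ 2 ≤ expectation (M * M) ρ := by
  set m := expectation M ρ
  have hX : (M - (m : ℂ) • 1)ᴴ = M - (m : ℂ) • 1 := by
    simp [Matrix.conjTranspose_sub, hM.eq]
  have hsq : (M - (m : ℂ) • 1) * (M - (m : ℂ) • 1)
      = M * M - ((2 * m : ℝ) : ℂ) • M + ((m ^ 2 : ℝ) : ℂ) • 1 := by
    simp only [sub_mul, mul_sub, Matrix.smul_mul, Matrix.mul_smul, Matrix.one_mul,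
      Matrix.mul_one, smul_smul]
    push_cast
    module
  have h := expectation_conjTranspose_mul_self_nonneg (M - (m : ℂ) • 1) hρ.1
  rw [hX, hsq, expectation_add, expectation_sub, expectation_real_smul, expectation_real_smul,
    expectation_one hρ] at h
  nlinarith

end Expectation

structure IsAnticommutingPair {ι : Type*} [Fintype ι] [DecidableEq ι] (O₀ O₁ : Matrix ι ι ℂ) :
    Prop where
  isHermitian_fst : O₀.IsHermitian
  isHermitian_snd : O₁.IsHermitian
  mul_self_fst : O₀ * O₀ = 1
  mul_self_snd : O₁ * O₁ = 1
  anticomm : O₀ * O₁ = -(O₁ * O₀)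

namespace IsAnticommutingPair

variable {ι : Type*} [Fintype ι] [DecidableEq ι] {O₀ O₁ : Matrix ι ι ℂ}

lemma symm (h : IsAnticommutingPair O₀ O₁) : IsAnticommutingPair O₁ O₀ :=
  ⟨h.isHermitian_snd, h.isHermitian_fst, h.mul_self_snd, h.mul_self_fst,
    by rw [h.anticomm, neg_neg]⟩

lemma mul_mul_self (h : IsAnticommutingPair O₀ O₁) : O₀ * O₁ * (O₀ * O₁) = -1 := by
  rw [Matrix.mul_assoc, ← Matrix.mul_assoc O₁, h.symm.anticomm, Matrix.neg_mul, Matrix.mul_neg,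
    Matrix.mul_assoc, h.mul_self_snd, Matrix.mul_one, h.mul_self_fst]

lemma conjTranspose_mul (h : IsAnticommutingPair O₀ O₁) : (O₀ * O₁)ᴴ = -(O₀ * O₁) := by
  rw [Matrix.conjTranspose_mul, h.isHermitian_fst.eq, h.isHermitian_snd.eq, h.symm.anticomm]

lemma sq_add_sq_expectation_le_one (h : IsAnticommutingPair O₀ O₁) {ρ : Matrix ι ι ℂ}
    (hρ : IsDensity ρ) : expectation O₀ ρ ^ 2 + expectation O₁ ρ ^ 2 ≤ 1 := by
  set a := expectation O₀ ρ
  set b := expectation O₁ ρ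
  set M := (a : ℂ) • O₀ + (b : ℂ) • O₁
  have hM : M.IsHermitian :=
    (h.isHermitian_fst.smul (Complex.conj_ofReal a)).add
      (h.isHermitian_snd.smul (Complex.conj_ofReal b))
  have hM2 : M * M = ((a ^ 2 + b ^ 2 : ℝ) : ℂ) • 1 := by
    simp only [M, add_mul, mul_add, Matrix.smul_mul, Matrix.mul_smul, smul_smul, h.mul_self_fst,
      h.mul_self_snd, h.anticomm]
    push_cast
    module
  have hEM : expectation M ρ = a ^ 2 + b ^ 2 := by
    rw [expectation_add, expectation_real_smul, expectation_real_smul]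
    ring
  have := sq_expectation_le hM hρ
  rw [hEM, hM2, expectation_real_smul, expectation_one hρ] at this
  nlinarith [sq_nonneg a, sq_nonneg b]

end IsAnticommutingPair

namespace Matrix

variable {ι κ : Type*} {α : Type*}

lemma neg_kronecker [Ring α] (X : Matrix ι ι α) (Y : Matrix κ κ α) : (-X) ⊗ₖ Y = -(X ⊗ₖ Y) := by
  ext; simp

lemma kronecker_neg [Ring α] (X : Matrix ι ι α) (Y : Matrix κ κ α) : X ⊗ₖ (-Y) = -(X ⊗ₖ Y) := by
  ext; simp

lemma IsHermitian.kronecker [CommRing α] [StarRing α] {X : Matrix ι ι α} {Y : Matrix κ κ α}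
    (hX : X.IsHermitian) (hY : Y.IsHermitian) : (X ⊗ₖ Y).IsHermitian := by
  rw [IsHermitian, conjTranspose_kronecker, hX.eq, hY.eq]

end Matrix

section CHSH

variable {ι κ : Type*}

def chsh (A₀ A₁ : Matrix ι ι ℂ) (B₀ B₁ : Matrix κ κ ℂ) : Matrix (ι × κ) (ι × κ) ℂ :=
  A₀ ⊗ₖ B₀ + A₀ ⊗ₖ B₁ + A₁ ⊗ₖ B₀ - A₁ ⊗ₖ B₁

lemma isHermitian_chsh {A₀ A₁ : Matrix ι ι ℂ} {B₀ B₁ : Matrix κ κ ℂ} (hA₀ : A₀.IsHermitian)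
    (hA₁ : A₁.IsHermitian) (hB₀ : B₀.IsHermitian) (hB₁ : B₁.IsHermitian) :
    (chsh A₀ A₁ B₀ B₁).IsHermitian :=
  (((hA₀.kronecker hB₀).add (hA₀.kronecker hB₁)).add (hA₁.kronecker hB₀)).sub (hA₁.kronecker hB₁)

/-- `CHSH` and `CHSH' = chsh A₁ (-A₀) B₀ B₁` anticommute and both square to `4 (1 - T)`,
`T = A₀A₁ ⊗ B₀B₁` being a Hermitian involution. -/
lemma IsAnticommutingPair.expectation_chsh_le [Fintype ι] [DecidableEq ι] [Fintype κ]
    [DecidableEq κ] {A₀ A₁ : Matrix ι ι ℂ} {B₀ B₁ : Matrix κ κ ℂ}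
    (hA : IsAnticommutingPair A₀ A₁) (hB : IsAnticommutingPair B₀ B₁)
    {σ : Matrix (ι × κ) (ι × κ) ℂ} (hσ : IsDensity σ) {a b : ℝ} (hab : a ^ 2 + b ^ 2 ≤ 1) :
    expectation ((a : ℂ) • chsh A₀ A₁ B₀ B₁ + (b : ℂ) • chsh A₁ (-A₀) B₀ B₁) σ ≤ 2 * √2 := by
  set T := (A₀ * A₁) ⊗ₖ (B₀ * B₁)
  set N := (a : ℂ) • chsh A₀ A₁ B₀ B₁ + (b : ℂ) • chsh A₁ (-A₀) B₀ B₁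
  have hT : T.IsHermitian := by
    rw [IsHermitian, conjTranspose_kronecker, hA.conjTranspose_mul, hB.conjTranspose_mul,
      neg_kronecker, kronecker_neg, neg_neg]
  have hT2 : T * T = 1 := by
    rw [← mul_kronecker_mul, hA.mul_mul_self, hB.mul_mul_self, neg_kronecker, kronecker_neg,
      neg_neg, one_kronecker_one]
  have hN : N.IsHermitian :=
    ((isHermitian_chsh hA.isHermitian_fst hA.isHermitian_snd hB.isHermitian_fst
      hB.isHermitian_snd).smul (Complex.conj_ofReal a)).add
    ((isHermitian_chsh hA.isHermitian_snd hA.isHermitian_fst.neg hB.isHermitian_fst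
      hB.isHermitian_snd).smul (Complex.conj_ofReal b))
  have hN2 : N * N = ((4 * (a ^ 2 + b ^ 2) : ℝ) : ℂ) • (1 - T) := by
    simp only [N, chsh, add_mul, mul_add, sub_mul, mul_sub, Matrix.smul_mul, Matrix.mul_smul,
      ← Matrix.mul_kronecker_mul, Matrix.neg_mul, Matrix.mul_neg, hA.mul_self_fst,
      hA.mul_self_snd, hB.mul_self_fst, hB.mul_self_snd, hA.symm.anticomm, hB.symm.anticomm,
      Matrix.neg_kronecker, Matrix.kronecker_neg, neg_neg, Matrix.one_kronecker_one]
    push_cast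
    module
  have hET : -1 ≤ expectation T σ := by
    have := sq_expectation_le hT hσ
    rw [hT2, expectation_one hσ] at this
    nlinarith
  have hEN : expectation N σ ^ 2 ≤ 8 := by
    have := sq_expectation_le hN hσ
    rw [hN2, expectation_real_smul, expectation_sub, expectation_one hσ] at this
    nlinarith [sq_nonneg a, sq_nonneg b]
  calc expectation N σ ≤ √8 := (le_abs_self _).trans (Real.abs_le_sqrt hEN)
    _ = 2 * √2 := by
      rw [show (8 : ℝ) = 2 ^ 2 * 2 by norm_num, Real.sqrt_mul (by positivity),
        Real.sqrt_sq zero_le_two]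

end CHSH

section Product

variable {ι κ : Type*} [Fintype ι] [Fintype κ]

lemma expectation_kronecker_eq_mul_left {O τ : Matrix ι ι ℂ} (hO : O.IsHermitian)
    (hτ : τ.IsHermitian) (X σ : Matrix κ κ ℂ) :
    expectation (O ⊗ₖ X) (τ ⊗ₖ σ) = expectation O τ * expectation X σ := by
  rw [expectation, ← mul_kronecker_mul, trace_kronecker, Complex.mul_re,
    im_trace_mul_eq_zero hO hτ, zero_mul, sub_zero, expectation, expectation]

lemma expectation_kronecker_eq_mul_right {O τ : Matrix ι ι ℂ} (hO : O.IsHermitian)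
    (hτ : τ.IsHermitian) (X σ : Matrix κ κ ℂ) :
    expectation (X ⊗ₖ O) (σ ⊗ₖ τ) = expectation X σ * expectation O τ := by
  rw [expectation, ← mul_kronecker_mul, trace_kronecker, Complex.mul_re,
    im_trace_mul_eq_zero hO hτ, mul_zero, sub_zero, expectation, expectation]

variable [DecidableEq ι]

lemma IsAnticommutingPair.expectation_pair_kronecker_le {O₀ O₁ τ : Matrix ι ι ℂ}
    (hO : IsAnticommutingPair O₀ O₁) (hτ : IsDensity τ) {X Y σ : Matrix κ κ ℂ} {c : ℝ}
    (hXY : ∀ a b : ℝ, a ^ 2 + b ^ 2 ≤ 1 → expectation ((a : ℂ) • X + (b : ℂ) • Y) σ ≤ c) :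
    expectation (O₀ ⊗ₖ X + O₁ ⊗ₖ Y) (τ ⊗ₖ σ) ≤ c := by
  have hτ' := hτ.1.isHermitian
  rw [expectation_add, expectation_kronecker_eq_mul_left hO.isHermitian_fst hτ',
    expectation_kronecker_eq_mul_left hO.isHermitian_snd hτ']
  simpa only [expectation_add, expectation_real_smul]
    using hXY _ _ (hO.sq_add_sq_expectation_le_one hτ)

lemma IsAnticommutingPair.expectation_kronecker_pair_le {O₀ O₁ τ : Matrix ι ι ℂ}
    (hO : IsAnticommutingPair O₀ O₁) (hτ : IsDensity τ) {X Y σ : Matrix κ κ ℂ} {c : ℝ}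
    (hXY : ∀ a b : ℝ, a ^ 2 + b ^ 2 ≤ 1 → expectation ((a : ℂ) • X + (b : ℂ) • Y) σ ≤ c) :
    expectation (X ⊗ₖ O₀ + Y ⊗ₖ O₁) (σ ⊗ₖ τ) ≤ c := by
  have hτ' := hτ.1.isHermitian
  rw [expectation_add, expectation_kronecker_eq_mul_right hO.isHermitian_fst hτ',
    expectation_kronecker_eq_mul_right hO.isHermitian_snd hτ', mul_comm,
    mul_comm (expectation Y σ)]
  simpa only [expectation_add, expectation_real_smul]
    using hXY _ _ (hO.sq_add_sq_expectation_le_one hτ)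

end Product

lemma expectation_reindex {ι κ : Type*} [Fintype ι] [Fintype κ] (e : ι ≃ κ) (M : Matrix κ κ ℂ)
    (σ : Matrix ι ι ℂ) :
    expectation M (σ.reindex e e) = expectation (M.reindex e.symm e.symm) σ := by
  simp only [expectation, trace, diag, mul_apply, reindex_apply, submatrix_apply, Equiv.symm_symm]
  rw [← e.sum_comp]
  simp_rw [← e.sum_comp (fun j => M _ j * _), Equiv.symm_apply_apply]

section Svetlichny

variable (A₀ A₁ B₀ B₁ C₀ C₁ : Matrix (Fin 2) (Fin 2) ℂ)

def svetlichny : Matrix (Fin 2 × (Fin 2 × Fin 2)) (Fin 2 × (Fin 2 × Fin 2)) ℂ :=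
  A₀ ⊗ₖ (B₀ ⊗ₖ C₁) + A₀ ⊗ₖ (B₁ ⊗ₖ C₀) + A₁ ⊗ₖ (B₀ ⊗ₖ C₀) - A₁ ⊗ₖ (B₁ ⊗ₖ C₁)
    + A₀ ⊗ₖ (B₁ ⊗ₖ C₁) + A₁ ⊗ₖ (B₀ ⊗ₖ C₁) + A₁ ⊗ₖ (B₁ ⊗ₖ C₀) - A₀ ⊗ₖ (B₀ ⊗ₖ C₀)

lemma svetlichny_eq_kronecker_chsh :
    svetlichny A₀ A₁ B₀ B₁ C₀ C₁ = A₀ ⊗ₖ chsh B₁ (-B₀) C₀ C₁ + A₁ ⊗ₖ chsh B₀ B₁ C₀ C₁ := by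
  ext ⟨a, b, c⟩ ⟨a', b', c'⟩
  simp only [svetlichny, chsh, Matrix.add_apply, Matrix.sub_apply, Matrix.neg_apply,
    kroneckerMap_apply]
  ring

lemma reindex_svetlichny_eACB :
    (svetlichny A₀ A₁ B₀ B₁ C₀ C₁).reindex eACB.symm eACB.symm
      = chsh A₁ (-A₀) C₀ C₁ ⊗ₖ B₀ + chsh A₀ A₁ C₀ C₁ ⊗ₖ B₁ := by
  ext ⟨⟨a, c⟩, b⟩ ⟨⟨a', c'⟩, b'⟩
  simp only [svetlichny, chsh, eACB, Equiv.symm_mk, Equiv.coe_fn_mk, reindex_apply,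
    submatrix_apply, Matrix.add_apply, Matrix.sub_apply, Matrix.neg_apply, kroneckerMap_apply]
  ring

lemma reindex_svetlichny_eABC :
    (svetlichny A₀ A₁ B₀ B₁ C₀ C₁).reindex eABC.symm eABC.symm
      = chsh A₀ A₁ B₀ B₁ ⊗ₖ C₁ + chsh A₁ (-A₀) B₀ B₁ ⊗ₖ C₀ := by
  ext ⟨⟨a, b⟩, c⟩ ⟨⟨a', b'⟩, c'⟩
  simp only [svetlichny, chsh, eABC, Equiv.symm_symm, Equiv.prodAssoc_apply, reindex_apply,
    submatrix_apply, Matrix.add_apply, Matrix.sub_apply, Matrix.neg_apply, kroneckerMap_apply]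
  ring

end Svetlichny

section Biseparable

variable {A₀ A₁ B₀ B₁ C₀ C₁ : Matrix (Fin 2) (Fin 2) ℂ} (hA : IsAnticommutingPair A₀ A₁)
  (hB : IsAnticommutingPair B₀ B₁) (hC : IsAnticommutingPair C₀ C₁)
include hA hB hC

lemma expectation_svetlichny_kronecker_le {τ : Matrix (Fin 2) (Fin 2) ℂ}
    {σ : Matrix (Fin 2 × Fin 2) (Fin 2 × Fin 2) ℂ} (hτ : IsDensity τ) (hσ : IsDensity σ) :
    expectation (svetlichny A₀ A₁ B₀ B₁ C₀ C₁) (τ ⊗ₖ σ) ≤ 2 * √2 := by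
  rw [svetlichny_eq_kronecker_chsh]
  refine hA.expectation_pair_kronecker_le hτ fun a b hab => ?_
  rw [add_comm]
  exact hB.expectation_chsh_le hC hσ (by linarith)

lemma expectation_svetlichny_reindex_eACB_le {τ : Matrix (Fin 2) (Fin 2) ℂ}
    {σ : Matrix (Fin 2 × Fin 2) (Fin 2 × Fin 2) ℂ} (hτ : IsDensity τ) (hσ : IsDensity σ) :
    expectation (svetlichny A₀ A₁ B₀ B₁ C₀ C₁) ((σ ⊗ₖ τ).reindex eACB eACB) ≤ 2 * √2 := by
  rw [expectation_reindex, reindex_svetlichny_eACB]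
  refine hB.expectation_kronecker_pair_le hτ fun a b hab => ?_
  rw [add_comm]
  exact hA.expectation_chsh_le hC hσ (by linarith)

lemma expectation_svetlichny_reindex_eABC_le {τ : Matrix (Fin 2) (Fin 2) ℂ}
    {σ : Matrix (Fin 2 × Fin 2) (Fin 2 × Fin 2) ℂ} (hτ : IsDensity τ) (hσ : IsDensity σ) :
    expectation (svetlichny A₀ A₁ B₀ B₁ C₀ C₁) ((σ ⊗ₖ τ).reindex eABC eABC) ≤ 2 * √2 := by
  rw [expectation_reindex, reindex_svetlichny_eABC]
  exact hC.symm.expectation_kronecker_pair_le hτ fun a b hab => hA.expectation_chsh_le hB hσ hab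

end Biseparable

theorem stmt12 (A₀ A₁ B₀ B₁ C₀ C₁ : Matrix (Fin 2) (Fin 2) ℂ)
    (hA₀ : A₀.IsHermitian) (hA₁ : A₁.IsHermitian)
    (hB₀ : B₀.IsHermitian) (hB₁ : B₁.IsHermitian)
    (hC₀ : C₀.IsHermitian) (hC₁ : C₁.IsHermitian)
    (hA₀sq : A₀ * A₀ = 1) (hA₁sq : A₁ * A₁ = 1)
    (hB₀sq : B₀ * B₀ = 1) (hB₁sq : B₁ * B₁ = 1)
    (hC₀sq : C₀ * C₀ = 1) (hC₁sq : C₁ * C₁ = 1)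
    (hAanti : A₀ * A₁ = -(A₁ * A₀)) (hBanti : B₀ * B₁ = -(B₁ * B₀))
    (hCanti : C₀ * C₁ = -(C₁ * C₀))
    (n : ℕ) (p q r : Fin n → ℝ)
    (hp : ∀ l, 0 ≤ p l) (hq : ∀ l, 0 ≤ q l) (hr : ∀ l, 0 ≤ r l)
    (hsum : ∑ l, p l + ∑ l, q l + ∑ l, r l = 1)
    (ρA ρB ρC : Fin n → Matrix (Fin 2) (Fin 2) ℂ)
    (ρBC ρAC ρAB : Fin n → Matrix (Fin 2 × Fin 2) (Fin 2 × Fin 2) ℂ)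
    (hρA : ∀ l, IsDensity (ρA l)) (hρB : ∀ l, IsDensity (ρB l))
    (hρC : ∀ l, IsDensity (ρC l)) (hρBC : ∀ l, IsDensity (ρBC l))
    (hρAC : ∀ l, IsDensity (ρAC l)) (hρAB : ∀ l, IsDensity (ρAB l))
    (ρ : Matrix (Fin 2 × (Fin 2 × Fin 2)) (Fin 2 × (Fin 2 × Fin 2)) ℂ)
    (hρ : ρ = ∑ l, (p l : ℂ) • (ρA l ⊗ₖ ρBC l)
        + ∑ l, (q l : ℂ) • ((ρAC l ⊗ₖ ρB l).reindex eACB eACB)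
        + ∑ l, (r l : ℂ) • ((ρAB l ⊗ₖ ρC l).reindex eABC eABC)) :
    (((A₀ ⊗ₖ (B₀ ⊗ₖ C₁) + A₀ ⊗ₖ (B₁ ⊗ₖ C₀) + A₁ ⊗ₖ (B₀ ⊗ₖ C₀) - A₁ ⊗ₖ (B₁ ⊗ₖ C₁)
        + A₀ ⊗ₖ (B₁ ⊗ₖ C₁) + A₁ ⊗ₖ (B₀ ⊗ₖ C₁) + A₁ ⊗ₖ (B₁ ⊗ₖ C₀) - A₀ ⊗ₖ (B₀ ⊗ₖ C₀))
      * ρ).trace).re ≤ 2 * Real.sqrt 2 := by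
  have hA : IsAnticommutingPair A₀ A₁ := ⟨hA₀, hA₁, hA₀sq, hA₁sq, hAanti⟩
  have hB : IsAnticommutingPair B₀ B₁ := ⟨hB₀, hB₁, hB₀sq, hB₁sq, hBanti⟩
  have hC : IsAnticommutingPair C₀ C₁ := ⟨hC₀, hC₁, hC₀sq, hC₁sq, hCanti⟩
  have hP := expectation_sum_smul_le _ p hp _
    fun l => expectation_svetlichny_kronecker_le hA hB hC (hρA l) (hρBC l)
  have hQ := expectation_sum_smul_le _ q hq _
    fun l => expectation_svetlichny_reindex_eACB_le hA hB hC (hρB l) (hρAC l)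
  have hR := expectation_sum_smul_le _ r hr _
    fun l => expectation_svetlichny_reindex_eABC_le hA hB hC (hρC l) (hρAB l)
  change expectation (svetlichny A₀ A₁ B₀ B₁ C₀ C₁) ρ ≤ 2 * √2
  rw [hρ, expectation_add_right, expectation_add_right]
  linear_combination hP + hQ + hR + 2 * √2 * hsum
end

section
/- For two anticommuting ±1-valued qubit observables O₀, O₁ (Hermitian involutions with O₀O₁ = −O₁O₀) and any qubit density matrix ρ, one has ⟨O₀⟩² + ⟨O₁⟩² ≤ 1 where ⟨O⟩ = Tr(Oρ); consequently for any reals α, β, |α⟨O₀⟩ + β⟨O₁⟩| ≤ √(α²+β²). -/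
open Matrix ComplexOrder

/-!
Put `a = ⟨O₀⟩`, `b = ⟨O₁⟩` and `M = a O₀ + b O₁`. Anticommutation makes `M² = (a² + b²) I`, so
`⟨M⟩ = ⟨M²⟩ = a² + b²`, and nonnegativity of the variance, `⟨M⟩² ≤ ⟨M²⟩`, gives
`(a² + b²)² ≤ a² + b²`, i.e. `a² + b² ≤ 1`. The bound on `|α a + β b|` is then Cauchy–Schwarz.
-/

theorem smul_add_smul_mul_self_of_anticomm {R A : Type*} [CommRing R] [Ring A] [Algebra R A]
    {x y : A} (hx : x * x = 1) (hy : y * y = 1) (hxy : x * y = -(y * x)) (a b : R) :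
    (a • x + b • y) * (a • x + b • y) = (a ^ 2 + b ^ 2) • (1 : A) := by
  simp only [add_mul, mul_add, smul_mul_smul_comm, hx, hy, hxy]
  module

theorem Matrix.PosSemidef.re_trace_mul_sq_le {n : Type*} [Fintype n] [DecidableEq n]
    {ρ M : Matrix n n ℂ} (hρ : ρ.PosSemidef) (hρ1 : ρ.trace = 1) (hM : M.IsHermitian) :
    (M * ρ).trace.re ^ 2 ≤ (M * M * ρ).trace.re := by
  set t := (M * ρ).trace.re with ht
  have hN : (M - t • 1).IsHermitian := hM.sub (isHermitian_one.smul (IsSelfAdjoint.all t))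
  have h0 : 0 ≤ ((M - t • 1) * ρ * (M - t • 1)ᴴ).trace.re :=
    (Complex.le_def.mp (hρ.mul_mul_conjTranspose_same _).trace_nonneg).1
  rw [hN.eq, trace_mul_cycle] at h0
  simp only [sub_mul, mul_sub, smul_mul_assoc, mul_smul_comm, one_mul, mul_one, trace_sub,
    trace_smul, Complex.sub_re, Complex.smul_re, hρ1, Complex.one_re, smul_eq_mul, ← ht] at h0
  linarith

theorem abs_mul_add_mul_le_sqrt_of_sq_add_sq_le_one {a b : ℝ} (hab : a ^ 2 + b ^ 2 ≤ 1)
    (α β : ℝ) : |α * a + β * b| ≤ √(α ^ 2 + β ^ 2) :=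
  Real.abs_le_sqrt <| by
    nlinarith [sq_nonneg (α * b - β * a), mul_nonneg (add_nonneg (sq_nonneg α) (sq_nonneg β))
      (sub_nonneg.2 hab)]

theorem stmt14 (O₀ O₁ ρ : Matrix (Fin 2) (Fin 2) ℂ)
    (hO₀ : O₀.IsHermitian) (hO₁ : O₁.IsHermitian)
    (hO₀sq : O₀ * O₀ = 1) (hO₁sq : O₁ * O₁ = 1)
    (hanti : O₀ * O₁ = -(O₁ * O₀))
    (hρ : ρ.PosSemidef) (hρ1 : ρ.trace = 1) :
    ((O₀ * ρ).trace).re ^ 2 + ((O₁ * ρ).trace).re ^ 2 ≤ 1 ∧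
    ∀ α β : ℝ, |α * ((O₀ * ρ).trace).re + β * ((O₁ * ρ).trace).re| ≤
      Real.sqrt (α ^ 2 + β ^ 2) := by
  set a := ((O₀ * ρ).trace).re
  set b := ((O₁ * ρ).trace).re
  have hM : (a • O₀ + b • O₁).IsHermitian := (hO₀.smul (.all a)).add (hO₁.smul (.all b))
  have hvar := hρ.re_trace_mul_sq_le hρ1 hM
  rw [smul_add_smul_mul_self_of_anticomm hO₀sq hO₁sq hanti] at hvar
  simp only [add_mul, smul_mul_assoc, one_mul, trace_add, trace_smul, Complex.add_re,
    Complex.smul_re, hρ1, Complex.one_re, smul_eq_mul] at hvar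
  have hab : a ^ 2 + b ^ 2 ≤ 1 := by nlinarith
  exact ⟨hab, abs_mul_add_mul_le_sqrt_of_sq_add_sq_le_one hab⟩
end
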